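/- Let H be a real Hilbert space, L : H → H a bounded self-adjoint operator, and suppose H = span{z} ⊕ W orthogonally with: (Lz, z) ≤ −C₁ < 0 and (Lφ, φ) ≥ C₂‖φ‖² for all φ ∈ W, where C₁, C₂ > 0. Then there exists C > 0 such that ‖Lv‖ ≥ C‖v‖ for all v ∈ H; in particular L is injective with closed range. -/

import Mathlib

theorem stmt14 (H : Type*) [NormedAddCommGroup H] [InnerProductSpace ℝ H] [CompleteSpace H]
    (L : H →L[ℝ] H) (hsa : IsSelfAdjoint L)
    (z : H) (hz : z ≠ 0) (C₁ C₂ : ℝ) (hC₁ : 0 < C₁) (hC₂ : 0 < C₂)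
    (hneg : inner ℝ (L z) z ≤ -C₁)
    (hpos : ∀ φ : H, inner ℝ φ z = (0 : ℝ) → C₂ * ‖φ‖ ^ 2 ≤ inner ℝ (L φ) φ) :
    ∃ C : ℝ, 0 < C ∧ (∀ v : H, C * ‖v‖ ≤ ‖L v‖) ∧ Function.Injective L := by
  have hsym := hsa.isSymmetric
  have hz2 : (0:ℝ) < ‖z‖ ^ 2 := pow_pos (norm_pos_iff.mpr hz) 2
  set c := min (C₁ / ‖z‖ ^ 2) C₂ with hc
  have hcpos : 0 < c := lt_min (div_pos hC₁ hz2) hC₂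
  have key : ∀ v : H, c * ‖v‖ ≤ ‖L v‖ := by
    intro v
    set a : ℝ := inner ℝ v z / ‖z‖ ^ 2 with ha
    set φ : H := v - a • z with hφ
    have hφz : inner ℝ φ z = (0:ℝ) := by
      rw [hφ, inner_sub_left, real_inner_smul_left, real_inner_self_eq_norm_sq, ha]
      field_simp
      ring
    have hv : v = φ + a • z := by rw [hφ]; abel
    set w : H := φ - a • z with hw
    -- inner ℝ (L v) w
    have hcross : inner ℝ (L z) φ = (inner ℝ (L φ) z : ℝ) := by
      have h1 := hsym φ z
      simp only [ContinuousLinearMap.coe_coe] at h1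
      rw [real_inner_comm, ← h1]
    have hinner : (inner ℝ (L v) w : ℝ) = inner ℝ (L φ) φ - a^2 * inner ℝ (L z) z := by
      rw [hv, hw]
      simp only [map_add, map_smul, inner_add_left, inner_sub_right, inner_smul_left,
        inner_smul_right, RCLike.conj_to_real]
      rw [hcross]; ring
    have hnorm2 : ‖v‖ ^ 2 = ‖φ‖ ^ 2 + a ^ 2 * ‖z‖ ^ 2 := by
      rw [hv, ← real_inner_self_eq_norm_sq, inner_add_add_self,
        real_inner_smul_left, real_inner_smul_right, real_inner_comm φ z, hφz,
        real_inner_smul_left, real_inner_smul_right, real_inner_self_eq_norm_sq]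
      rw [real_inner_self_eq_norm_sq]; ring
    have hwnorm2 : ‖w‖ ^ 2 = ‖φ‖ ^ 2 + a ^ 2 * ‖z‖ ^ 2 := by
      rw [hw, ← real_inner_self_eq_norm_sq, inner_sub_sub_self,
        real_inner_smul_left, real_inner_smul_right, real_inner_comm φ z, hφz,
        real_inner_smul_left, real_inner_smul_right, real_inner_self_eq_norm_sq]
      rw [real_inner_self_eq_norm_sq]; ring
    have hwv : ‖w‖ = ‖v‖ := by
      have := hnorm2.trans hwnorm2.symm
      nlinarith [norm_nonneg w, norm_nonneg v]
    have hlow : c * ‖v‖ ^ 2 ≤ (inner ℝ (L v) w : ℝ) := by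
      rw [hinner, hnorm2]
      have h1 : C₂ * ‖φ‖ ^ 2 ≤ inner ℝ (L φ) φ := hpos φ hφz
      have h2 : a ^ 2 * inner ℝ (L z) z ≤ a ^ 2 * (-C₁) :=
        mul_le_mul_of_nonneg_left hneg (sq_nonneg a)
      have hc1 : c ≤ C₁ / ‖z‖ ^ 2 := min_le_left _ _
      have hc2 : c ≤ C₂ := min_le_right _ _
      have hc1' : c * ‖z‖ ^ 2 ≤ C₁ := by
        rw [← div_mul_cancel₀ C₁ (ne_of_gt hz2)]
        exact mul_le_mul_of_nonneg_right hc1 (le_of_lt hz2)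
      nlinarith [sq_nonneg a, sq_nonneg ‖φ‖]
    have hup : (inner ℝ (L v) w : ℝ) ≤ ‖L v‖ * ‖v‖ := by
      calc (inner ℝ (L v) w : ℝ) ≤ ‖L v‖ * ‖w‖ := real_inner_le_norm _ _
        _ = ‖L v‖ * ‖v‖ := by rw [hwv]
    rcases eq_or_ne v 0 with rfl | hv0
    · simp
    · have hvn : 0 < ‖v‖ := norm_pos_iff.mpr hv0
      have : c * ‖v‖ * ‖v‖ ≤ ‖L v‖ * ‖v‖ := by nlinarith
      exact le_of_mul_le_mul_right this hvn
  refine ⟨c, hcpos, key, ?_⟩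
  intro u v huv
  have h0 : L (u - v) = 0 := by rw [map_sub, huv, sub_self]
  have := key (u - v)
  rw [h0, norm_zero] at this
  have : ‖u - v‖ ≤ 0 := by nlinarith [norm_nonneg (u - v)]
  have := le_antisymm this (norm_nonneg _)
  rwa [norm_eq_zero, sub_eq_zero] at this
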